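/- arXiv:2603.01076 — 6 statements merged into one kernel-verified Lean document; each statement's English description precedes it below -/
import Mathlib

section
/- Let M be an n×n real matrix and D a positive-definite diagonal n×n real matrix such that M*D + D*Mᵀ is positive definite. Then every eigenvalue of M has strictly positive real part. -/
open Matrix

private lemma aux_re_quad {n : ℕ} (S : Matrix (Fin n) (Fin n) ℝ) (u : Fin n → ℂ) :
    (star u ⬝ᵥ ((S.map (Complex.ofReal ·)) *ᵥ u)).re
      = (fun i => (u i).re) ⬝ᵥ (S *ᵥ fun i => (u i).re)
        + (fun i => (u i).im) ⬝ᵥ (S *ᵥ fun i => (u i).im) := by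
  simp only [dotProduct, mulVec, Matrix.map_apply, Pi.star_apply, Finset.mul_sum,
    Complex.re_sum, ← Finset.sum_add_distrib]
  refine Finset.sum_congr rfl fun i _ => ?_
  refine Finset.sum_congr rfl fun j _ => ?_
  simp [Complex.mul_re, Complex.mul_im]

theorem stmt_0 (n : ℕ) (M : Matrix (Fin n) (Fin n) ℝ) (d : Fin n → ℝ)
    (hd : ∀ i, 0 < d i)
    (hpd : ∀ x : Fin n → ℝ, x ≠ 0 →
      0 < x ⬝ᵥ ((M * Matrix.diagonal d + Matrix.diagonal d * Mᵀ) *ᵥ x)) :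
    ∀ μ : ℂ, μ ∈ spectrum ℂ (M.map (Complex.ofReal ·)) → 0 < μ.re := by
  intro μ hμ
  set A : Matrix (Fin n) (Fin n) ℂ := M.map (Complex.ofReal ·) with hA
  rw [spectrum.mem_iff] at hμ
  have hdet : ((algebraMap ℂ (Matrix (Fin n) (Fin n) ℂ)) μ - A).det = 0 := by
    by_contra h
    exact hμ ((Matrix.isUnit_iff_isUnit_det _).2 (isUnit_iff_ne_zero.2 h))
  have hdetT : ((((algebraMap ℂ (Matrix (Fin n) (Fin n) ℂ)) μ - A)ᵀ)).det = 0 := by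
    rw [Matrix.det_transpose]; exact hdet
  obtain ⟨u, hu0, hu⟩ := (Matrix.exists_mulVec_eq_zero_iff).2 hdetT
  have hAu : Aᵀ *ᵥ u = μ • u := by
    have h1 : ((algebraMap ℂ (Matrix (Fin n) (Fin n) ℂ)) μ - A)ᵀ *ᵥ u
        = μ • u - Aᵀ *ᵥ u := by
      rw [Matrix.transpose_sub, Matrix.sub_mulVec, Matrix.algebraMap_eq_diagonal,
        Matrix.diagonal_transpose]
      simp [Matrix.diagonal_mulVec_single]
      ext i
      simp [Matrix.mulVec_diagonal]
    rw [h1] at hu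
    exact (sub_eq_zero.mp hu).symm
  -- complex diagonal matrix
  set Dc : Matrix (Fin n) (Fin n) ℂ := Matrix.diagonal (fun i => (d i : ℂ)) with hDc
  have hDmap : (Matrix.diagonal d).map (Complex.ofReal ·) = Dc := by
    rw [hDc, Matrix.diagonal_map (by simp)]
  -- q = u* D u
  set q : ℂ := star u ⬝ᵥ (Dc *ᵥ u) with hq
  have hq_eq : q = ((∑ i, d i * Complex.normSq (u i) : ℝ) : ℂ) := by
    simp [hq, hDc, dotProduct, Matrix.mulVec_diagonal, Complex.normSq_eq_conj_mul_self]
    refine Finset.sum_congr rfl fun i _ => ?_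
    ring
  have hqre : 0 < ∑ i, d i * Complex.normSq (u i) := by
    obtain ⟨i, hi⟩ := Function.ne_iff.mp hu0
    refine Finset.sum_pos' (fun j _ => mul_nonneg (hd j).le (Complex.normSq_nonneg _))
      ⟨i, Finset.mem_univ i, mul_pos (hd i) ?_⟩
    simpa [Complex.normSq_pos] using hi
  -- star u is also "eigen" for A on the left
  have hstar : Aᵀ *ᵥ star u = star (Aᵀ *ᵥ u) := by
    ext j
    simp [Matrix.mulVec, dotProduct, hA, map_sum]
  -- the two quadratic pieces
  have ht1 : star u ⬝ᵥ ((A * Dc) *ᵥ u) = (starRingEnd ℂ) μ * q := by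
    rw [← Matrix.mulVec_mulVec, Matrix.dotProduct_mulVec, ← Matrix.mulVec_transpose,
      hstar, hAu]
    simp [hq, dotProduct, Finset.mul_sum, mul_comm, mul_assoc, mul_left_comm]
  have ht2 : star u ⬝ᵥ ((Dc * Aᵀ) *ᵥ u) = μ * q := by
    rw [← Matrix.mulVec_mulVec, hAu]
    simp [hq, Matrix.mulVec_smul, dotProduct, Finset.mul_sum, mul_comm, mul_assoc,
      mul_left_comm]
  -- assemble
  set S : Matrix (Fin n) (Fin n) ℝ := M * Matrix.diagonal d + Matrix.diagonal d * Mᵀ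
    with hS
  have hSmap : S.map (Complex.ofReal ·) = A * Dc + Dc * Aᵀ := by
    ext i j
    simp [hS, hA, hDc, Matrix.mul_apply, Matrix.diagonal_apply, Matrix.map_apply,
      Matrix.transpose_apply, apply_ite, Finset.sum_ite_eq, Finset.sum_ite_eq']
  have hquad : star u ⬝ᵥ ((S.map (Complex.ofReal ·)) *ᵥ u)
      = (μ + (starRingEnd ℂ) μ) * q := by
    rw [hSmap, Matrix.add_mulVec, dotProduct_add, ht1, ht2]
    ring
  -- real part of LHS is positive
  have hx : ¬((fun i => (u i).re) = 0 ∧ (fun i => (u i).im) = 0) := by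
    rintro ⟨h1, h2⟩
    apply hu0
    ext i
    have e1 := congrFun h1 i
    have e2 := congrFun h2 i
    simp only [Pi.zero_apply] at e1 e2 ⊢
    exact Complex.ext e1 e2
  have hnn : ∀ x : Fin n → ℝ, 0 ≤ x ⬝ᵥ (S *ᵥ x) := by
    intro x
    by_cases hx0 : x = 0
    · simp [hx0]
    · exact (hpd x hx0).le
  have hpos : 0 < (star u ⬝ᵥ ((S.map (Complex.ofReal ·)) *ᵥ u)).re := by
    rw [aux_re_quad]
    rcases not_and_or.mp hx with h | h
    · have := hpd _ h
      have := hnn (fun i => (u i).im)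
      linarith
    · have := hpd _ h
      have := hnn (fun i => (u i).re)
      linarith
  rw [hquad, hq_eq] at hpos
  simp [Complex.mul_re, Complex.add_re, Complex.add_im, Complex.conj_re,
    Complex.conj_im] at hpos
  nlinarith [hqre]
end

section
/- If M is an n×n real matrix that is Volterra–Lyapunov stable (there exists a positive diagonal D with MD + DMᵀ positive definite), then M is D-stable: for every diagonal matrix E with strictly positive diagonal entries, every eigenvalue of M*E has strictly positive real part. -/
open Matrix

theorem stmt_1 (n : ℕ) (M : Matrix (Fin n) (Fin n) ℝ)
    (hVL : ∃ d : Fin n → ℝ, (∀ i, 0 < d i) ∧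
      ∀ x : Fin n → ℝ, x ≠ 0 →
        0 < x ⬝ᵥ ((M * Matrix.diagonal d + Matrix.diagonal d * Mᵀ) *ᵥ x)) :
    ∀ e : Fin n → ℝ, (∀ i, 0 < e i) →
      ∀ μ : ℂ, μ ∈ spectrum ℂ ((M * Matrix.diagonal e).map (Complex.ofReal ·)) →
        0 < μ.re := by
  obtain ⟨d, hd, hS⟩ := hVL
  intro e he μ hμ
  set B : Matrix (Fin n) (Fin n) ℂ := (M * Matrix.diagonal e).map (Complex.ofReal ·) with hBdef
  -- get eigenvector of the transpose
  have h1 := spectrum.mem_iff.mp hμ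
  rw [Matrix.isUnit_iff_isUnit_det] at h1
  have hdet : (μ • (1 : Matrix (Fin n) (Fin n) ℂ) - B).det = 0 := by
    simpa [Algebra.algebraMap_eq_smul_one, isUnit_iff_ne_zero] using h1
  have hdetT : (μ • (1 : Matrix (Fin n) (Fin n) ℂ) - Bᵀ).det = 0 := by
    rw [← Matrix.det_transpose]
    simpa [Matrix.transpose_sub, Matrix.transpose_smul] using hdet
  obtain ⟨v, hv0, hveq⟩ := (Matrix.exists_mulVec_eq_zero_iff).mpr hdetT
  rw [Matrix.sub_mulVec, sub_eq_zero, Matrix.smul_mulVec, Matrix.one_mulVec] at hveq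
  -- componentwise eigen equation
  have heig : ∀ i, (∑ j, ((M j i * e i : ℝ) : ℂ) * v j) = μ * v i := by
    intro i
    have := congrFun hveq i
    simpa [Matrix.mulVec, dotProduct, Matrix.transpose_apply, hBdef,
      Matrix.map_apply, Matrix.mul_diagonal] using this.symm
  set x : Fin n → ℝ := fun i => (v i).re with hxdef
  set y : Fin n → ℝ := fun i => (v i).im with hydef
  have hre : ∀ i, (∑ j, M j i * e i * x j) = μ.re * x i - μ.im * y i := by
    intro i
    have := congrArg Complex.re (heig i)
    simpa [Complex.re_sum, Complex.mul_re, hxdef, hydef] using this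
  have him : ∀ i, (∑ j, M j i * e i * y j) = μ.re * y i + μ.im * x i := by
    intro i
    have := congrArg Complex.im (heig i)
    simpa [Complex.im_sum, Complex.mul_im, hxdef, hydef] using this
  set P : ℝ := ∑ i, (d i / e i) * (x i ^ 2 + y i ^ 2) with hPdef
  -- key identity
  have key : μ.re * P = ∑ i, ∑ j, d i * M j i * (x i * x j + y i * y j) := by
    have step : ∀ i, ((d i / e i) * (x i * (∑ j, M j i * e i * x j) + y i * (∑ j, M j i * e i * y j)))
        = ∑ j, d i * M j i * (x i * x j + y i * y j) := by
      intro i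
      simp only [Finset.mul_sum, ← Finset.sum_add_distrib]
      refine Finset.sum_congr rfl fun j _ => ?_
      have hei : e i ≠ 0 := (he i).ne'
      field_simp
    rw [hPdef, Finset.mul_sum]
    refine Finset.sum_congr rfl fun i _ => ?_
    rw [← step i, hre i, him i]
    have hei : e i ≠ 0 := (he i).ne'
    field_simp
    ring
  -- quadratic form identity
  have quad : ∀ w : Fin n → ℝ,
      w ⬝ᵥ ((M * Matrix.diagonal d + Matrix.diagonal d * Mᵀ) *ᵥ w)
        = 2 * ∑ i, ∑ j, d i * M j i * (w i * w j) := by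
    intro w
    have expand : w ⬝ᵥ ((M * Matrix.diagonal d + Matrix.diagonal d * Mᵀ) *ᵥ w)
        = (∑ i, ∑ j, M i j * d j * (w i * w j)) + ∑ i, ∑ j, d i * M j i * (w i * w j) := by
      simp only [dotProduct, Matrix.mulVec, Matrix.add_apply, Matrix.mul_diagonal,
        Matrix.diagonal_mul, Matrix.transpose_apply]
      rw [← Finset.sum_add_distrib]
      refine Finset.sum_congr rfl fun i _ => ?_
      rw [Finset.mul_sum, ← Finset.sum_add_distrib]
      refine Finset.sum_congr rfl fun j _ => ?_
      ring
    have swap : (∑ i, ∑ j, M i j * d j * (w i * w j)) = ∑ i, ∑ j, d i * M j i * (w i * w j) := by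
      rw [Finset.sum_comm]
      exact Finset.sum_congr rfl fun i _ => Finset.sum_congr rfl fun j _ => by ring
    rw [expand, swap]; ring
  -- combine
  have combine : x ⬝ᵥ ((M * Matrix.diagonal d + Matrix.diagonal d * Mᵀ) *ᵥ x)
      + y ⬝ᵥ ((M * Matrix.diagonal d + Matrix.diagonal d * Mᵀ) *ᵥ y)
      = 2 * (μ.re * P) := by
    rw [quad x, quad y, key]
    rw [← mul_add, ← Finset.sum_add_distrib]
    congr 1
    refine Finset.sum_congr rfl fun i _ => ?_
    rw [← Finset.sum_add_distrib]
    exact Finset.sum_congr rfl fun j _ => by ring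
  -- nonnegativity of the quadratic form
  have hq : ∀ w : Fin n → ℝ,
      0 ≤ w ⬝ᵥ ((M * Matrix.diagonal d + Matrix.diagonal d * Mᵀ) *ᵥ w) := by
    intro w
    by_cases hw : w = 0
    · subst hw; simp
    · exact (hS w hw).le
  -- v nonzero gives x or y nonzero
  obtain ⟨i0, hvi0⟩ : ∃ i, v i ≠ 0 := by
    by_contra hc
    push_neg at hc
    exact hv0 (funext hc)
  have hxy0 : x i0 ≠ 0 ∨ y i0 ≠ 0 := by
    by_contra hc
    push_neg at hc
    exact hvi0 (Complex.ext hc.1 hc.2)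
  have hP : 0 < P := by
    rw [hPdef]
    refine Finset.sum_pos' (fun i _ => ?_) ⟨i0, Finset.mem_univ i0, ?_⟩
    · have := (hd i).le
      have := (he i).le
      positivity
    · have h2 : 0 < x i0 ^ 2 + y i0 ^ 2 := by
        rcases hxy0 with h | h
        · have : 0 < x i0 ^ 2 := by positivity
          nlinarith [sq_nonneg (y i0)]
        · have : 0 < y i0 ^ 2 := by positivity
          nlinarith [sq_nonneg (x i0)]
      have h3 : 0 < d i0 / e i0 := div_pos (hd i0) (he i0)
      positivity
  have hpos : 0 < 2 * (μ.re * P) := by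
    rw [← combine]
    rcases hxy0 with h | h
    · have hx0 : x ≠ 0 := fun hc => h (by rw [hc]; rfl)
      have := hS x hx0
      have := hq y
      linarith
    · have hy0 : y ≠ 0 := fun hc => h (by rw [hc]; rfl)
      have := hS y hy0
      have := hq x
      linarith
  nlinarith [hP, hpos]
end

section
/- If M is an n×n real matrix that is Volterra–Lyapunov stable, then every principal submatrix of M (the submatrix of M obtained by restricting rows and columns to a nonempty index subset S) is also Volterra–Lyapunov stable. -/
open Matrix Finset

theorem stmt_2 (n : ℕ) (M : Matrix (Fin n) (Fin n) ℝ)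
    (hVL : ∃ d : Fin n → ℝ, (∀ i, 0 < d i) ∧
      ∀ x : Fin n → ℝ, x ≠ 0 →
        0 < x ⬝ᵥ ((M * Matrix.diagonal d + Matrix.diagonal d * Mᵀ) *ᵥ x)) :
    ∀ S : Finset (Fin n), S.Nonempty →
      ∃ d : {i // i ∈ S} → ℝ, (∀ i, 0 < d i) ∧
        ∀ x : {i // i ∈ S} → ℝ, x ≠ 0 →
          0 < x ⬝ᵥ (((M.submatrix (Subtype.val) (Subtype.val)) * Matrix.diagonal d +
            Matrix.diagonal d * (M.submatrix (Subtype.val) (Subtype.val))ᵀ) *ᵥ x) := by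
  obtain ⟨d, hd, hq⟩ := hVL
  intro S hS
  refine ⟨fun i => d i.val, fun i => hd i.val, ?_⟩
  intro x hx
  set A : Matrix (Fin n) (Fin n) ℝ := M * Matrix.diagonal d + Matrix.diagonal d * Mᵀ with hA
  -- the submatrix form equals A.submatrix
  have hB : (M.submatrix (Subtype.val) (Subtype.val)) * Matrix.diagonal (fun i : {i // i ∈ S} => d i.val) +
      Matrix.diagonal (fun i : {i // i ∈ S} => d i.val) * (M.submatrix (Subtype.val) (Subtype.val))ᵀ
      = A.submatrix Subtype.val Subtype.val := by
    ext i j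
    simp [hA, Matrix.mul_apply, Matrix.diagonal, Matrix.add_apply, Finset.sum_ite_eq,
      Finset.sum_ite_eq', mul_comm]
  rw [hB]
  set y : Fin n → ℝ := fun i => if h : i ∈ S then x ⟨i, h⟩ else 0 with hy
  have hyne : y ≠ 0 := by
    obtain ⟨i, hi⟩ := Function.ne_iff.mp hx
    intro h
    apply hi
    have := congrFun h i.1
    simpa [hy, i.2] using this
  have key := hq y hyne
  have heq : x ⬝ᵥ (A.submatrix Subtype.val Subtype.val *ᵥ x) = y ⬝ᵥ (A *ᵥ y) := by
    simp only [dotProduct, mulVec, Matrix.submatrix_apply]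
    have inner : ∀ i : Fin n, (∑ j : Fin n, A i j * y j) = ∑ j ∈ S, A i j * y j := by
      intro i
      rw [← Finset.sum_subset (Finset.subset_univ S)]
      intro j _ hj
      simp [hy, hj]
    calc ∑ i : {i // i ∈ S}, x i * ∑ j : {j // j ∈ S}, A i.val j.val * x j
        = ∑ i ∈ S.attach, x i * ∑ j ∈ S.attach, A i.val j.val * x j := by
          rw [Finset.univ_eq_attach]
      _ = ∑ i ∈ S, y i * ∑ j ∈ S, A i j * y j := by
          rw [← Finset.sum_attach S (fun i => y i * ∑ j ∈ S, A i j * y j)]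
          refine Finset.sum_congr rfl fun i _ => ?_
          rw [← Finset.sum_attach S (fun j => A i.val j * y j)]
          simp [hy, i.2]
      _ = ∑ i : Fin n, y i * ∑ j : Fin n, A i j * y j := by
          rw [Finset.sum_subset (Finset.subset_univ S)]
          · exact Finset.sum_congr rfl fun i _ => by rw [inner]
          · intro i _ hi; simp [hy, hi]
  rw [heq]
  exact key
end

section
/- (Combinatorial existence lemma, two-group case) Let p₁, p₂ ≥ 1 and let positive reals λ¹_{(i,j)}, λ²_{(i,j)} > 0 be given for i ∈ {1,…,p₁}, j ∈ {1,…,p₂}, together with target ratios k¹_i > 0 (i ∈ {1,…,p₁−1}) and k²_j > 0 (j ∈ {1,…,p₂−1}). Then there exist strictly positive weights γ_{(i,j)} such that for all i, (Σ_j γ_{(i+1,j)} λ¹_{(i+1,j)})/(Σ_j γ_{(1,j)} λ¹_{(1,j)}) = k¹_i, and for all j, (Σ_i γ_{(i,j+1)} λ²_{(i,j+1)})/(Σ_i γ_{(i,1)} λ²_{(i,1)}) = k²_j. -/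
theorem stmt_10 (p₁ p₂ : ℕ) (hp₁ : 0 < p₁) (hp₂ : 0 < p₂)
    (lam₁ lam₂ : Fin p₁ → Fin p₂ → ℝ)
    (hlam₁ : ∀ i j, 0 < lam₁ i j) (hlam₂ : ∀ i j, 0 < lam₂ i j)
    (k₁ : Fin p₁ → ℝ) (hk₁ : ∀ i, 0 < k₁ i)
    (k₂ : Fin p₂ → ℝ) (hk₂ : ∀ j, 0 < k₂ j) :
    ∃ γ : Fin p₁ → Fin p₂ → ℝ, (∀ i j, 0 < γ i j) ∧
      (∀ i : Fin p₁, i ≠ ⟨0, hp₁⟩ →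
        ∑ j, γ i j * lam₁ i j = k₁ i * ∑ j, γ ⟨0, hp₁⟩ j * lam₁ ⟨0, hp₁⟩ j) ∧
      (∀ j : Fin p₂, j ≠ ⟨0, hp₂⟩ →
        ∑ i, γ i j * lam₂ i j = k₂ j * ∑ i, γ i ⟨0, hp₂⟩ * lam₂ i ⟨0, hp₂⟩) := by
  haveI : NeZero p₁ := ⟨hp₁.ne'⟩
  haveI : NeZero p₂ := ⟨hp₂.ne'⟩
  set z₁ : Fin p₁ := ⟨0, hp₁⟩ with hz₁
  set z₂ : Fin p₂ := ⟨0, hp₂⟩ with hz₂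
  set a : Fin p₁ → ℝ := fun i => if i = z₁ then 1 else k₁ i with ha
  have hapos : ∀ i, 0 < a i := by
    intro i
    by_cases h : i = z₁ <;> simp [ha, h, hk₁ i]
  have haz : a z₁ = 1 := by simp [ha]
  set R : Fin p₂ → ℝ := fun j => ∑ i, a i * lam₂ i j / lam₁ i j with hR
  have hRpos : ∀ j, 0 < R j := by
    intro j
    apply Finset.sum_pos
    · intro i _
      exact div_pos (mul_pos (hapos i) (hlam₂ i j)) (hlam₁ i j)
    · exact ⟨z₁, Finset.mem_univ _⟩
  set b : Fin p₂ → ℝ := fun j => if j = z₂ then 1 else k₂ j * R z₂ / R j with hb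
  have hbpos : ∀ j, 0 < b j := by
    intro j
    by_cases h : j = z₂
    · simp [hb, h]
    · simp only [hb, h, if_false]
      exact div_pos (mul_pos (hk₂ j) (hRpos z₂)) (hRpos j)
  have hbz : b z₂ = 1 := by simp [hb]
  refine ⟨fun i j => a i * b j / lam₁ i j, ?_, ?_, ?_⟩
  · intro i j
    exact div_pos (mul_pos (hapos i) (hbpos j)) (hlam₁ i j)
  · intro i hi
    have key : ∀ i' : Fin p₁, ∑ j, a i' * b j / lam₁ i' j * lam₁ i' j = a i' * ∑ j, b j := by
      intro i'
      rw [Finset.mul_sum]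
      refine Finset.sum_congr rfl fun j _ => ?_
      rw [div_mul_cancel₀ _ (hlam₁ i' j).ne']
    rw [key, key, haz, one_mul]
    have : a i = k₁ i := by simp [ha, hi]
    rw [this]
  · intro j hj
    have key : ∀ j' : Fin p₂, ∑ i, a i * b j' / lam₁ i j' * lam₂ i j' = b j' * R j' := by
      intro j'
      rw [hR, Finset.mul_sum]
      refine Finset.sum_congr rfl fun i _ => ?_
      field_simp
    rw [key, key, hbz, one_mul]
    have : b j = k₂ j * R z₂ / R j := by simp [hb, hj]
    rw [this, div_mul_cancel₀ _ (hRpos j).ne']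
end

section
/- (Combinatorial existence lemma, general case) Let m ≥ 1 and group sizes p₁,…,p_m ≥ 1; let K = Π_φ {1,…,p_φ} be the set of multi-indices κ = (κ₁,…,κ_m). Given strictly positive reals λ^φ_κ > 0 for every φ ∈ {1,…,m} and κ ∈ K, and target ratios k^φ_j > 0 for every φ and j ∈ {1,…,p_φ−1}, there exist strictly positive weights γ_κ > 0 such that for every group φ and every j ∈ {1,…,p_φ−1}: (Σ_{κ : κ_φ = j+1} γ_κ λ^φ_κ) / (Σ_{κ : κ_φ = 1} γ_κ λ^φ_κ) = k^φ_j. -/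
/-!
Induct on the number of groups. Fix the first coordinate `κ 0 = r`; by induction each slice
carries positive weights `δ r` solving the ratio equations of the remaining groups. Those
equations are homogeneous in each slice, so rescaling slice `r` by any `t r > 0` preserves them,
and the scaling factors `t r` can be chosen to produce the prescribed ratios of the first group.
-/

open Finset

namespace Fin

variable {m : ℕ} {α : Fin (m + 1) → Type*} [∀ i, Fintype (α i)] {β : Type*} [AddCommMonoid β]

theorem sum_univ_pi_eq_sum_cons (f : (∀ i, α i) → β) :
    ∑ κ, f κ = ∑ r : α 0, ∑ κ' : ∀ i : Fin m, α i.succ, f (cons r κ') := by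
  rw [← (consEquiv α).sum_comp, Fintype.sum_prod_type]
  rfl

variable [∀ i, DecidableEq (α i)]

theorem sum_filter_apply_zero_eq (f : (∀ i, α i) → β) (r : α 0) :
    ∑ κ with κ 0 = r, f κ = ∑ κ' : ∀ i : Fin m, α i.succ, f (cons r κ') := by
  rw [sum_filter, sum_univ_pi_eq_sum_cons, Fintype.sum_eq_single r fun s hs => ?_]
  · simp
  · simp [hs]

theorem sum_filter_apply_succ_eq (f : (∀ i, α i) → β) (ψ : Fin m) (j : α ψ.succ) :
    ∑ κ with κ ψ.succ = j, f κ =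
      ∑ r : α 0, ∑ κ' : ∀ i : Fin m, α i.succ with κ' ψ = j, f (cons r κ') := by
  simp only [sum_filter, sum_univ_pi_eq_sum_cons, cons_succ]

end Fin

theorem exists_pos_weights_sum_filter_eq_mul {m : ℕ} {α : Fin m → Type*}
    [∀ i, Fintype (α i)] [∀ i, DecidableEq (α i)] (z : ∀ i, α i)
    (lam : Fin m → (∀ i, α i) → ℝ) (hlam : ∀ φ κ, 0 < lam φ κ)
    (k : ∀ φ, α φ → ℝ) (hk : ∀ φ j, 0 < k φ j) :
    ∃ γ : (∀ i, α i) → ℝ, (∀ κ, 0 < γ κ) ∧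
      ∀ φ (j : α φ), j ≠ z φ →
        ∑ κ with κ φ = j, γ κ * lam φ κ = k φ j * ∑ κ with κ φ = z φ, γ κ * lam φ κ := by
  induction m with
  | zero => exact ⟨fun _ => 1, fun _ => one_pos, fun φ => φ.elim0⟩
  | succ m ih =>
    choose δ hδ_pos hδ using fun r : α 0 =>
      ih (fun i => z i.succ) (fun ψ κ' => lam ψ.succ (Fin.cons r κ')) (fun _ _ => hlam _ _)
        (fun ψ => k ψ.succ) (fun _ _ => hk _ _)
    have : ∀ i : Fin m, Nonempty (α i.succ) := fun i => ⟨z i.succ⟩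
    set S : α 0 → ℝ := fun r => ∑ κ', δ r κ' * lam 0 (Fin.cons r κ')
    have hS : ∀ r, 0 < S r := fun r =>
      sum_pos (fun κ' _ => mul_pos (hδ_pos r κ') (hlam _ _)) univ_nonempty
    set c := Function.update (k 0) (z 0) 1
    have hc : ∀ r, 0 < c r :=
      (Function.forall_update_iff _ fun _ y => 0 < y).2 ⟨one_pos, fun r _ => hk 0 r⟩
    -- rescaling the slice `κ 0 = r` by `c r / S r` gives it total `lam 0`-mass `c r`
    refine ⟨fun κ => c (κ 0) / S (κ 0) * δ (κ 0) (Fin.tail κ),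
      fun κ => mul_pos (div_pos (hc _) (hS _)) (hδ_pos _ _), Fin.cases ?_ fun ψ => ?_⟩
    · have mass : ∀ r, ∑ κ with κ 0 = r, c (κ 0) / S (κ 0) * δ (κ 0) (Fin.tail κ) * lam 0 κ
          = c r := fun r => by
        simp only [Fin.sum_filter_apply_zero_eq, Fin.cons_zero, Fin.tail_cons, mul_assoc,
          ← mul_sum]
        exact div_mul_cancel₀ _ (hS r).ne'
      intro j hj
      rw [mass, mass]
      simp [c, hj]
    · intro j hj
      simp only [Fin.sum_filter_apply_succ_eq, Fin.cons_zero, Fin.tail_cons, mul_assoc,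
        ← mul_sum, hδ _ ψ j hj]
      rw [mul_sum]
      exact sum_congr rfl fun r _ => mul_left_comm _ _ _

theorem stmt_11 (m : ℕ) (p : Fin m → ℕ) (hp : ∀ φ, 0 < p φ)
    (lam : (φ : Fin m) → ((ψ : Fin m) → Fin (p ψ)) → ℝ)
    (hlam : ∀ φ κ, 0 < lam φ κ)
    (k : (φ : Fin m) → Fin (p φ) → ℝ) (hk : ∀ φ j, 0 < k φ j) :
    ∃ γ : ((ψ : Fin m) → Fin (p ψ)) → ℝ, (∀ κ, 0 < γ κ) ∧
      ∀ (φ : Fin m) (j : Fin (p φ)), j ≠ ⟨0, hp φ⟩ →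
        (∑ κ ∈ Finset.univ.filter (fun κ => κ φ = j), γ κ * lam φ κ) =
          k φ j * ∑ κ ∈ Finset.univ.filter (fun κ => κ φ = ⟨0, hp φ⟩), γ κ * lam φ κ :=
  exists_pos_weights_sum_filter_eq_mul (fun φ => ⟨0, hp φ⟩) lam hlam k hk
end

section
/- If M is an n×n real matrix and D is a positive diagonal matrix such that MD + DMᵀ is positive definite, then all eigenvalues of M have positive real part; hence det(M) > 0. -/
open Matrix Polynomial

/-- eval of charpoly is a determinant. -/
lemma aux_eval_charpoly {n : ℕ} (A : Matrix (Fin n) (Fin n) ℂ) (μ : ℂ) :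
    A.charpoly.eval μ = (Matrix.diagonal (fun _ => μ) - A).det := by
  rw [Matrix.charpoly, ← Polynomial.coe_evalRingHom, RingHom.map_det]
  congr 1
  ext i j
  by_cases h : i = j <;>
    simp [Matrix.charmatrix_apply, Matrix.diagonal_apply, h]

lemma aux_mem_spectrum_iff {n : ℕ} (A : Matrix (Fin n) (Fin n) ℂ) (μ : ℂ) :
    μ ∈ spectrum ℂ A ↔ A.charpoly.eval μ = 0 := by
  rw [spectrum.mem_iff, aux_eval_charpoly, Matrix.isUnit_iff_isUnit_det]
  have h1 : algebraMap ℂ (Matrix (Fin n) (Fin n) ℂ) μ = Matrix.diagonal (fun _ => μ) := by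
    ext i j
    by_cases h : i = j <;> simp [Matrix.algebraMap_matrix_apply, h]
  rw [h1, isUnit_iff_ne_zero, not_not]

theorem stmt_19 (n : ℕ) (M : Matrix (Fin n) (Fin n) ℝ) (d : Fin n → ℝ)
    (hd : ∀ i, 0 < d i)
    (hpd : ∀ x : Fin n → ℝ, x ≠ 0 →
      0 < x ⬝ᵥ ((M * Matrix.diagonal d + Matrix.diagonal d * Mᵀ) *ᵥ x)) :
    (∀ μ : ℂ, μ ∈ spectrum ℂ (M.map (Complex.ofReal ·)) → 0 < μ.re) ∧
      0 < M.det := by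
  set B : Matrix (Fin n) (Fin n) ℝ := M * Matrix.diagonal d + Matrix.diagonal d * Mᵀ with hB
  set Mc : Matrix (Fin n) (Fin n) ℂ := M.map (Complex.ofReal ·) with hMc
  -- positivity of the complexified quadratic form
  have hpdC : ∀ u : Fin n → ℂ, u ≠ 0 →
      0 < (star u ⬝ᵥ ((B.map (Complex.ofReal ·)) *ᵥ u)).re := by
    intro u hu
    set a : Fin n → ℝ := fun i => (u i).re with ha
    set b : Fin n → ℝ := fun i => (u i).im with hb2
    have key : (star u ⬝ᵥ ((B.map (Complex.ofReal ·)) *ᵥ u)).re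
        = a ⬝ᵥ (B *ᵥ a) + b ⬝ᵥ (B *ᵥ b) := by
      simp only [dotProduct, Matrix.mulVec, Matrix.map_apply, Pi.star_apply,
        Finset.mul_sum, Complex.re_sum]
      rw [← Finset.sum_add_distrib]
      refine Finset.sum_congr rfl fun i _ => ?_
      rw [← Finset.sum_add_distrib]
      refine Finset.sum_congr rfl fun j _ => ?_
      simp [Complex.mul_re, Complex.mul_im, ha, hb2]
    have hab : a ≠ 0 ∨ b ≠ 0 := by
      by_contra h
      push_neg at h
      apply hu
      funext i
      have h1 := congrFun h.1 i
      have h2 := congrFun h.2 i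
      simp [ha, hb2] at h1 h2
      exact Complex.ext h1 h2
    have hnn : ∀ x : Fin n → ℝ, 0 ≤ x ⬝ᵥ (B *ᵥ x) := by
      intro x
      by_cases hx : x = 0
      · simp [hx]
      · exact (hpd x hx).le
    rw [key]
    rcases hab with h | h
    · exact add_pos_of_pos_of_nonneg (hpd a h) (hnn b)
    · exact add_pos_of_nonneg_of_pos (hnn a) (hpd b h)
  -- the eigenvalue statement
  have hspec : ∀ μ : ℂ, μ ∈ spectrum ℂ Mc → 0 < μ.re := by
    intro μ hμ
    rw [aux_mem_spectrum_iff, aux_eval_charpoly] at hμ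
    obtain ⟨v, hv, hv0⟩ := (Matrix.exists_mulVec_eq_zero_iff.2 hμ)
    have heig : Mc *ᵥ v = μ • v := by
      have := hv0
      rw [Matrix.sub_mulVec, sub_eq_zero] at this
      funext i
      have := congrFun this i
      simpa [Matrix.mulVec_diagonal] using this.symm
    -- u = D⁻¹ v
    set u : Fin n → ℂ := fun i => v i / (d i : ℂ) with hu
    have hdne : ∀ i, (d i : ℂ) ≠ 0 := fun i => by
      exact_mod_cast (hd i).ne'
    have hvu : ∀ i, v i = (d i : ℂ) * u i := fun i => by
      simp only [hu]
      rw [mul_div_assoc', mul_comm, mul_div_assoc, div_self (hdne i), mul_one]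
    have hune : u ≠ 0 := by
      intro h
      apply hv
      funext i
      rw [hvu i, congrFun h i]
      simp
    set T : ℝ := ∑ i, d i * Complex.normSq (u i) with hT
    have hTpos : 0 < T := by
      have : ∃ i, u i ≠ 0 := by
        by_contra h
        push_neg at h
        exact hune (funext h)
      obtain ⟨i, hi⟩ := this
      refine Finset.sum_pos' (fun j _ => ?_) ⟨i, Finset.mem_univ i, ?_⟩
      · exact mul_nonneg (hd j).le (Complex.normSq_nonneg _)
      · exact mul_pos (hd i) (Complex.normSq_pos.2 hi)
    -- main identity
    have hmain : star u ⬝ᵥ ((B.map (Complex.ofReal ·)) *ᵥ u)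
        = (μ + (starRingEnd ℂ) μ) * (T : ℂ) := by
      set Dc : Matrix (Fin n) (Fin n) ℂ := Matrix.diagonal (fun i => (d i : ℂ)) with hDc
      have hBc : B.map (Complex.ofReal ·) = Mc * Dc + Dc * Mcᵀ := by
        have hcoe : (Complex.ofReal ·) = ⇑Complex.ofRealHom := rfl
        rw [hB, hcoe, Matrix.map_add _ (by simp), Matrix.map_mul, Matrix.map_mul,
          Matrix.diagonal_map (by simp), Matrix.transpose_map]
        rfl
      have hDcu : Dc *ᵥ u = v := by
        funext i
        rw [hDc, Matrix.mulVec_diagonal]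
        exact (hvu i).symm
      have hterm1 : star u ⬝ᵥ ((Mc * Dc) *ᵥ u) = μ * (T : ℂ) := by
        rw [← Matrix.mulVec_mulVec, hDcu, heig, dotProduct_smul, smul_eq_mul]
        congr 1
        simp only [dotProduct, Pi.star_apply, hT]
        push_cast
        refine Finset.sum_congr rfl fun i _ => ?_
        rw [hvu i, ← Complex.mul_conj]
        simp only [Complex.star_def]
        ring
      have hstarv : Mc *ᵥ (star v) = star (Mc *ᵥ v) := by
        funext i
        simp only [Matrix.mulVec, dotProduct, Pi.star_apply, hMc, Matrix.map_apply,
          star_sum, star_mul', Complex.star_def, Complex.conj_ofReal]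
      have hterm2 : star u ⬝ᵥ ((Dc * Mcᵀ) *ᵥ u) = (starRingEnd ℂ) μ * (T : ℂ) := by
        rw [← Matrix.mulVec_mulVec]
        have h1 : star u ⬝ᵥ (Dc *ᵥ (Mcᵀ *ᵥ u)) = star v ⬝ᵥ (Mcᵀ *ᵥ u) := by
          simp only [dotProduct, hDc, Matrix.mulVec_diagonal, Pi.star_apply]
          refine Finset.sum_congr rfl fun i _ => ?_
          rw [hvu i]
          simp only [star_mul', Complex.star_def, Complex.conj_ofReal]
          ring
        rw [h1, dotProduct_comm, Matrix.mulVec_transpose, ← Matrix.dotProduct_mulVec]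
        rw [hstarv, heig, star_smul, dotProduct_smul, smul_eq_mul]
        congr 1
        simp only [dotProduct, Pi.star_apply, hT]
        push_cast
        refine Finset.sum_congr rfl fun i _ => ?_
        rw [hvu i, ← Complex.mul_conj]
        simp only [star_mul', Complex.star_def, Complex.conj_ofReal]
        ring
      rw [hBc, Matrix.add_mulVec, dotProduct_add, hterm1, hterm2, add_mul]
    have := hpdC u hune
    rw [hmain] at this
    simp only [Complex.add_re, Complex.mul_re, Complex.conj_re, Complex.conj_im,
      Complex.ofReal_re, Complex.ofReal_im, Complex.add_im] at this
    nlinarith [hTpos]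
  refine ⟨fun μ hμ => hspec μ hμ, ?_⟩
  -- determinant part
  rcases Nat.eq_zero_or_pos n with hn | hn
  · subst hn
    simp [Matrix.det_fin_zero]
  · set p : Polynomial ℝ := M.charpoly with hp
    have hmono : p.Monic := M.charpoly_monic
    have hdeg : p.natDegree = n := by
      rw [hp, M.charpoly_natDegree_eq_dim, Fintype.card_fin]
    have hroots : ∀ x : ℝ, x ≤ 0 → p.eval x ≠ 0 := by
      intro x hx hx0
      have h1 : (Mc).charpoly.eval (x : ℂ) = 0 := by
        rw [hMc, show ((Complex.ofReal ·)) = ⇑Complex.ofRealHom from rfl, Matrix.charpoly_map]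
        rw [Polynomial.eval_map, show ((x:ℂ)) = Complex.ofRealHom x from rfl,
          Polynomial.eval₂_at_apply, ← hp, hx0]
        simp
      have := hspec x ((aux_mem_spectrum_iff _ _).2 h1)
      simp only [Complex.ofReal_re] at this
      linarith
    set q : Polynomial ℝ := Polynomial.C ((-1:ℝ)^n) * p.comp (-Polynomial.X) with hq
    have hqeval : ∀ x : ℝ, q.eval x = (-1)^n * p.eval (-x) := by
      intro x
      simp [hq]
    have hcompne : p.comp (-Polynomial.X) ≠ 0 := by
      intro h
      have := congrArg (Polynomial.eval (0:ℝ)) h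
      simp at this
      exact hroots 0 le_rfl (by simpa using this)
    have hlcq : q.leadingCoeff = 1 := by
      rw [hq, Polynomial.leadingCoeff_mul, Polynomial.leadingCoeff_C,
        Polynomial.leadingCoeff_comp (by simp)]
      simp [hmono.leadingCoeff, hdeg, ← pow_add]
    have hqdeg : 0 < q.degree := by
      rw [← Polynomial.natDegree_pos_iff_degree_pos, hq,
        Polynomial.natDegree_mul (Polynomial.C_ne_zero.2 (pow_ne_zero _ (by norm_num))) hcompne,
        Polynomial.natDegree_C, Polynomial.natDegree_comp]
      simpa [hdeg] using hn
    have htend := Polynomial.tendsto_atTop_of_leadingCoeff_nonneg q hqdeg (by rw [hlcq]; norm_num)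
    obtain ⟨T, hT1, hT0⟩ := ((htend.eventually_ge_atTop 1).and (Filter.eventually_ge_atTop 0)).exists
    have hq0ne : q.eval 0 ≠ 0 := by
      rw [hqeval, neg_zero]
      intro h
      rcases mul_eq_zero.1 h with h | h
      · exact absurd h (pow_ne_zero _ (by norm_num))
      · exact hroots 0 le_rfl h
    have hq0 : 0 < q.eval 0 := by
      by_contra hle
      push_neg at hle
      have hlt : q.eval 0 < 0 := lt_of_le_of_ne hle hq0ne
      have hIVT := intermediate_value_Icc hT0 (q.continuous.continuousOn)
      have h0mem : (0:ℝ) ∈ Set.Icc (q.eval 0) (q.eval T) := ⟨hlt.le, by linarith⟩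
      obtain ⟨c, hc, hceval⟩ := hIVT h0mem
      have hpc : p.eval (-c) = 0 := by
        have h2 : q.eval c = 0 := hceval
        rw [hqeval] at h2
        rcases mul_eq_zero.1 h2 with h | h
        · exact absurd h (pow_ne_zero _ (by norm_num))
        · exact h
      exact hroots (-c) (by simpa using hc.1) hpc
    rw [Matrix.det_eq_sign_charpoly_coeff, Polynomial.coeff_zero_eq_eval_zero]
    have := hq0
    rw [hqeval, neg_zero] at this
    simpa using this
end
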